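/- Let U ⊆ ℝ² be open and connected and let E : U → ℝ be smooth, strictly positive, and harmonic. If 2c²E³ = (E_u)² + (E_v)² on U for some constant c ∈ ℝ, then c = 0 and E is constant on U. -/

import Mathlib

noncomputable def pdu (f : ℝ × ℝ → ℝ) : ℝ × ℝ → ℝ := fun p => fderiv ℝ f p (1, 0)
noncomputable def pdv (f : ℝ × ℝ → ℝ) : ℝ × ℝ → ℝ := fun p => fderiv ℝ f p (0, 1)

noncomputable def pd (w : ℝ × ℝ) (f : ℝ × ℝ → ℝ) : ℝ × ℝ → ℝ := fun p => fderiv ℝ f p w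

section toolkit
variable {f g : ℝ × ℝ → ℝ} {p w : ℝ × ℝ}

lemma ContDiffAt.pd' (hf : ContDiffAt ℝ (⊤ : ℕ∞) f p) (w : ℝ × ℝ) :
    ContDiffAt ℝ (⊤ : ℕ∞) (pd w f) p := by
  have h1 : ContDiffAt ℝ (⊤ : ℕ∞) (fderiv ℝ f) p := hf.fderiv_right (by simp)
  exact (ContinuousLinearMap.apply ℝ ℝ w).contDiff.comp_contDiffAt p h1

lemma ContDiffAt.pdd (hf : ContDiffAt ℝ (⊤ : ℕ∞) f p) (w : ℝ × ℝ) :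
    DifferentiableAt ℝ (pd w f) p :=
  (hf.pd' w).differentiableAt (by simp)

lemma pd_congr (h : f =ᶠ[nhds p] g) (w : ℝ × ℝ) : pd w f p = pd w g p := by
  unfold pd; rw [h.fderiv_eq]

lemma pd_eqOn {U : Set (ℝ × ℝ)} (hU : IsOpen U) (h : ∀ q ∈ U, f q = g q)
    (hp : p ∈ U) (w : ℝ × ℝ) : pd w f p = pd w g p :=
  pd_congr (Filter.eventuallyEq_of_mem (hU.mem_nhds hp) h) w

lemma pd_add (hf : DifferentiableAt ℝ f p) (hg : DifferentiableAt ℝ g p) :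
    pd w (fun q => f q + g q) p = pd w f p + pd w g p := by
  unfold pd; rw [fderiv_fun_add hf hg]; simp

lemma pd_neg : pd w (fun q => -(f q)) p = -(pd w f p) := by
  unfold pd; rw [fderiv_fun_neg]; simp

lemma pd_mul (hf : DifferentiableAt ℝ f p) (hg : DifferentiableAt ℝ g p) :
    pd w (fun q => f q * g q) p = f p * pd w g p + g p * pd w f p := by
  unfold pd; rw [fderiv_fun_mul hf hg]; simp

lemma pd_const_mul (hf : DifferentiableAt ℝ f p) (a : ℝ) :
    pd w (fun q => a * f q) p = a * pd w f p := by
  unfold pd; rw [fderiv_const_mul hf]; simp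

lemma pd_sq (hf : DifferentiableAt ℝ f p) :
    pd w (fun q => f q * f q) p = 2 * f p * pd w f p := by
  rw [pd_mul hf hf]; ring

lemma pd_cube (hf : DifferentiableAt ℝ f p) :
    pd w (fun q => f q * (f q * f q)) p = 3 * (f p * f p) * pd w f p := by
  rw [pd_mul hf (hf.fun_mul hf), pd_sq hf]; ring

lemma pd_comm (hf : ContDiffAt ℝ (⊤ : ℕ∞) f p) (w w' : ℝ × ℝ) :
    pd w (pd w' f) p = pd w' (pd w f) p := by
  have h2 : DifferentiableAt ℝ (fderiv ℝ f) p :=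
    (hf.fderiv_right (m := 1) (WithTop.coe_le_coe.mpr le_top)).differentiableAt one_ne_zero
  have hsym := hf.isSymmSndFDerivAt (by rw [minSmoothness_of_isRCLikeNormedField]; exact WithTop.coe_le_coe.mpr le_top)
  have key : ∀ a b : ℝ × ℝ, pd a (pd b f) p = fderiv ℝ (fderiv ℝ f) p a b := by
    intro a b
    have h3 : pd b f = fun q => (ContinuousLinearMap.apply ℝ ℝ b : ((ℝ×ℝ) →L[ℝ] ℝ) →L[ℝ] ℝ) (fderiv ℝ f q) := rfl
    show fderiv ℝ (pd b f) p a = _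
    rw [h3, fderiv_clm_apply (differentiableAt_const _) h2]
    simp
  rw [key, key, hsym]

end toolkit

theorem stmt_8 (U : Set (ℝ × ℝ)) (hU : IsOpen U) (hUc : IsConnected U)
    (E : ℝ × ℝ → ℝ) (hE : ContDiffOn ℝ (⊤ : ℕ∞) E U) (hEpos : ∀ p ∈ U, 0 < E p)
    (hharm : ∀ p ∈ U, pdu (pdu E) p + pdv (pdv E) p = 0)
    (c : ℝ)
    (heq : ∀ p ∈ U, 2 * c^2 * (E p)^3 = (pdu E p)^2 + (pdv E p)^2) :
    c = 0 ∧ ∃ k : ℝ, ∀ p ∈ U, E p = k := by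
  have hpdu : pdu = pd (1,0) := rfl
  have hpdv : pdv = pd (0,1) := rfl
  rw [hpdu, hpdv] at heq hharm
  set u : ℝ × ℝ := (1,0) with hu
  set v : ℝ × ℝ := (0,1) with hv
  have hsm : ∀ q ∈ U, ContDiffAt ℝ (⊤ : ℕ∞) E q := fun q hq => hE.contDiffAt (hU.mem_nhds hq)
  obtain ⟨p₀, hp₀⟩ := hUc.nonempty
  -- First-derivative identity on U
  have hD1 : ∀ w : ℝ × ℝ, ∀ q ∈ U,
      3*c^2*((E q * E q) * pd w E q)
        = pd u E q * pd w (pd u E) q + pd v E q * pd w (pd v E) q := by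
    intro w q hq
    have key : pd w (fun r => 2*c^2*(E r * (E r * E r))) q
        = pd w (fun r => pd u E r * pd u E r + pd v E r * pd v E r) q := by
      apply pd_eqOn hU ?_ hq w
      intro r hr
      linear_combination heq r hr
    have dE : DifferentiableAt ℝ E q := (hsm q hq).differentiableAt (by simp)
    have dEu := (hsm q hq).pdd u
    have dEv := (hsm q hq).pdd v
    rw [pd_const_mul (dE.fun_mul (dE.fun_mul dE)), pd_cube dE,
        pd_add (dEu.fun_mul dEu) (dEv.fun_mul dEv), pd_sq dEu, pd_sq dEv] at key
    linarith [key]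
  -- Second-derivative identity at points of U
  have hD2 : ∀ w : ℝ × ℝ, ∀ p ∈ U,
      3*c^2*((E p * E p) * pd w (pd w E) p + pd w E p * (2 * E p * pd w E p))
        = (pd u E p * pd w (pd w (pd u E)) p + pd w (pd u E) p * pd w (pd u E) p)
        + (pd v E p * pd w (pd w (pd v E)) p + pd w (pd v E) p * pd w (pd v E) p) := by
    intro w p hp
    have hsp := hsm p hp
    have dE : DifferentiableAt ℝ E p := hsp.differentiableAt (by simp)
    have dEw := hsp.pdd w
    have dEu := hsp.pdd u
    have dEv := hsp.pdd v
    have dEuw := (hsp.pd' u).pdd w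
    have dEvw := (hsp.pd' v).pdd w
    have key : pd w (fun q => 3*c^2*((E q * E q) * pd w E q)) p
        = pd w (fun q => pd u E q * pd w (pd u E) q + pd v E q * pd w (pd v E) q) p :=
      pd_eqOn hU (hD1 w) hp w
    rw [pd_const_mul ((dE.fun_mul dE).fun_mul dEw),
        pd_mul (dE.fun_mul dE) dEw, pd_sq dE,
        pd_add (dEu.fun_mul dEuw) (dEv.fun_mul dEvw),
        pd_mul dEu dEuw, pd_mul dEv dEvw] at key
    linarith [key]
  -- conclude c = 0
  have hc : c = 0 := by
    by_contra hc0
    set p := p₀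
    have hp : p ∈ U := hp₀
    have hsp := hsm p hp
    set e := E p with he
    set eu := pd u E p with heu
    set ev := pd v E p with hev
    set a := pd u (pd u E) p with ha
    set b := pd v (pd u E) p with hb
    set b2 := pd u (pd v E) p with hb2
    set d := pd v (pd v E) p with hd
    set A1 := pd u (pd u (pd u E)) p with hA1
    set A2 := pd v (pd v (pd u E)) p with hA2
    set B1 := pd u (pd u (pd v E)) p with hB1
    set B2 := pd v (pd v (pd v E)) p with hB2
    have Fb : b = b2 := pd_comm hsp v u
    have Fad : a + d = 0 := hharm p hp
    have Fheq : 2*c^2*e^3 = eu^2 + ev^2 := heq p hp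
    have hepos : 0 < e := hEpos p hp
    -- Laplacians of the first partials vanish
    have FA : A1 + A2 = 0 := by
      have h1 : A2 = pd v (pd u (pd v E)) p :=
        pd_eqOn hU (fun q hq => pd_comm (hsm q hq) v u) hp v
      have h2 : pd v (pd u (pd v E)) p = pd u (pd v (pd v E)) p :=
        pd_comm (hsp.pd' v) v u
      have h3 : pd u (pd v (pd v E)) p = pd u (fun q => -(pd u (pd u E) q)) p :=
        pd_eqOn hU (fun q hq => by linarith [hharm q hq]) hp u
      have h4 : pd u (fun q => -(pd u (pd u E) q)) p = -A1 := pd_neg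
      rw [h1, h2, h3, h4]; ring
    have FB : B1 + B2 = 0 := by
      have h1 : B1 = pd u (pd v (pd u E)) p :=
        pd_eqOn hU (fun q hq => pd_comm (hsm q hq) u v) hp u
      have h2 : pd u (pd v (pd u E)) p = pd v (pd u (pd u E)) p :=
        pd_comm (hsp.pd' u) u v
      have h3 : pd v (pd u (pd u E)) p = pd v (fun q => -(pd v (pd v E) q)) p :=
        pd_eqOn hU (fun q hq => by linarith [hharm q hq]) hp v
      have h4 : pd v (fun q => -(pd v (pd v E) q)) p = -B2 := pd_neg
      rw [h1, h2, h3, h4]; ring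
    have EqU := hD2 u p hp
    have EqV := hD2 v p hp
    rw [← he, ← heu, ← hev, ← ha, ← hA1, ← hb2, ← hB1] at EqU
    rw [← he, ← heu, ← hev, ← hd, ← hA2, ← hb, ← hB2] at EqV
    have hd' : d = -a := by linarith
    have hb2' : b2 = b := Fb.symm
    have hA2' : A2 = -A1 := by linarith
    have hB2' : B2 = -B1 := by linarith
    have F1 : 3*c^2*((e*e)*eu) = eu*a + ev*b := by
      have h := hD1 u p hp
      rw [← he, ← heu, ← hev, ← ha, ← hb2] at h
      rw [Fb]; linarith [h]
    have F2 : 3*c^2*((e*e)*ev) = eu*b + ev*d := by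
      have h := hD1 v p hp
      rw [← he, ← heu, ← hev, ← hb, ← hd] at h
      linarith [h]
    have h5 : 6*c^2*e*(eu^2+ev^2) = 2*(a^2+b^2) := by
      rw [hb2'] at EqU
      rw [hd', hA2', hB2'] at EqV
      linear_combination EqU + EqV
    have h5' : a^2+b^2 = 6*c^4*e^4 := by
      linear_combination (-1/2 : ℝ)*h5 - 3*c^2*e*Fheq
    have h6 : (a^2+b^2)*(eu^2+ev^2) = 9*c^4*e^4*(eu^2+ev^2) := by
      rw [hd'] at F2
      linear_combination (-(3*c^2*((e*e)*eu) + eu*a + ev*b))*F1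
        + (-(3*c^2*((e*e)*ev) + eu*b - ev*a))*F2
    have step1 : 3*c^4*e^4*(eu^2+ev^2) = 0 := by
      linear_combination (eu^2+ev^2)*h5' - h6
    have step2 : c^6*e^7 = 0 := by
      linear_combination (c^4*e^4/2)*Fheq + (1/6 : ℝ)*step1
    exact (mul_ne_zero (pow_ne_zero _ hc0) (ne_of_gt (pow_pos hepos 7))) step2
  -- Now c = 0 : gradient vanishes on U
  subst hc
  refine ⟨rfl, E p₀, ?_⟩
  have hgrad : ∀ q ∈ U, fderiv ℝ E q = 0 := by
    intro q hq
    have h := heq q hq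
    have h1 : pd u E q = 0 := by nlinarith [sq_nonneg (pd u E q), sq_nonneg (pd v E q)]
    have h2 : pd v E q = 0 := by nlinarith [sq_nonneg (pd u E q), sq_nonneg (pd v E q)]
    refine ContinuousLinearMap.ext fun z => ?_
    have hz : z = z.1 • u + z.2 • v := by
      simp [hu, hv, Prod.ext_iff]
    rw [hz, map_add, map_smul, map_smul]
    have h1' : fderiv ℝ E q u = 0 := h1
    have h2' : fderiv ℝ E q v = 0 := h2
    simp [h1', h2']
  -- local constancy
  have hloc : ∀ q ∈ U, ∃ s, IsOpen s ∧ q ∈ s ∧ s ⊆ U ∧ ∀ r ∈ s, E r = E q := by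
    intro q hq
    obtain ⟨ε, hε, hball⟩ := Metric.isOpen_iff.1 hU q hq
    refine ⟨Metric.ball q ε, Metric.isOpen_ball, Metric.mem_ball_self hε, hball, ?_⟩
    intro r hr
    have hdiff : DifferentiableOn ℝ E (Metric.ball q ε) :=
      fun z hz => ((hsm z (hball hz)).differentiableAt (by simp)).differentiableWithinAt
    refine (convex_ball q ε).is_const_of_fderivWithin_eq_zero hdiff ?_ hr (Metric.mem_ball_self hε)
    intro z hz
    rw [fderivWithin_of_isOpen Metric.isOpen_ball hz]
    exact hgrad z (hball hz)
  -- connectedness argument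
  intro p hp
  by_contra hne
  set A : Set (ℝ × ℝ) := {q | ∃ s, IsOpen s ∧ q ∈ s ∧ s ⊆ U ∧ ∀ r ∈ s, E r = E p₀} with hA
  set B : Set (ℝ × ℝ) := {q | ∃ s, IsOpen s ∧ q ∈ s ∧ s ⊆ U ∧ ∀ r ∈ s, E r ≠ E p₀} with hB
  have hAopen : IsOpen A := by
    rw [isOpen_iff_mem_nhds]
    rintro q ⟨s, hs, hqs, hsU, hval⟩
    exact Filter.mem_of_superset (hs.mem_nhds hqs)
      (fun r hr => ⟨s, hs, hr, hsU, hval⟩)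
  have hBopen : IsOpen B := by
    rw [isOpen_iff_mem_nhds]
    rintro q ⟨s, hs, hqs, hsU, hval⟩
    exact Filter.mem_of_superset (hs.mem_nhds hqs)
      (fun r hr => ⟨s, hs, hr, hsU, hval⟩)
  have hsub : U ⊆ A ∪ B := by
    intro q hq
    obtain ⟨s, hs, hqs, hsU, hval⟩ := hloc q hq
    by_cases hcase : E q = E p₀
    · exact Or.inl ⟨s, hs, hqs, hsU, fun r hr => (hval r hr).trans hcase⟩
    · exact Or.inr ⟨s, hs, hqs, hsU, fun r hr => (hval r hr).symm ▸ hcase⟩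
  have hAne : (U ∩ A).Nonempty := by
    obtain ⟨s, hs, hqs, hsU, hval⟩ := hloc p₀ hp₀
    exact ⟨p₀, hp₀, ⟨s, hs, hqs, hsU, hval⟩⟩
  have hBne : (U ∩ B).Nonempty := by
    obtain ⟨s, hs, hqs, hsU, hval⟩ := hloc p hp
    exact ⟨p, hp, ⟨s, hs, hqs, hsU, fun r hr => (hval r hr).symm ▸ hne⟩⟩
  obtain ⟨q, -, ⟨s1, _, hq1, _, hv1⟩, ⟨s2, _, hq2, _, hv2⟩⟩ :=
    hUc.isPreconnected A B hAopen hBopen hsub hAne hBne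
  exact hv2 q hq2 (hv1 q hq1)
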